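/- arXiv:1112.2100 — 2 statements merged into one kernel-verified Lean document; each statement's English description precedes it below -/
import Mathlib

section
/- The Hermite-based second kind Genocchi polynomials with j = 2 and a = 1 satisfy the explicit expansion ₕ𝒢_n^{(2,1)}(x,y) = n! Σ_{l=0}^{⌊n/2⌋} y^l 𝒢_{n-2l}(x) / (l! (n-2l)!). -/
/-- Series of `e^{xt}` : coefficients `x^n/n!`. -/
noncomputable def expS (x : ℝ) : PowerSeries ℝ :=
  PowerSeries.mk fun n => x ^ n / n.factorial

/-- Series of `e^{t} + e^{-t}` : coefficients `(1+(-1)^n)/n!`. -/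
noncomputable def coshS : PowerSeries ℝ :=
  PowerSeries.mk fun n => (1 + (-1 : ℝ) ^ n) / n.factorial

/-- Series of `e^{y t^j}` : coefficients `y^{n/j}/(n/j)!` when `j ∣ n`. -/
noncomputable def expTail (j : ℕ) (y : ℝ) : PowerSeries ℝ :=
  PowerSeries.mk fun n => if j ∣ n then y ^ (n / j) / (n / j).factorial else 0

/-! Since the series of `e^t + e^{-t}` is nonzero, it cancels from the two generating
functions: the Hermite-based series is `e^{yt²}` times the Genocchi series. Comparing
coefficients of `tⁿ` in this Cauchy product, only the even powers `t^{2l}` of `e^{yt²}`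
contribute. -/

open Finset PowerSeries

theorem Finset.sum_range_ite_dvd {M : Type*} [AddCommMonoid M] {j : ℕ} (hj : 0 < j) (n : ℕ)
    (g : ℕ → M) :
    ∑ i ∈ range (n + 1), (if j ∣ i then g i else 0) = ∑ l ∈ range (n / j + 1), g (j * l) := by
  have hfilter : {i ∈ range (n + 1) | j ∣ i} = (range (n / j + 1)).image (j * ·) := by
    ext i
    simp only [mem_filter, mem_range, mem_image, Nat.lt_succ_iff, Nat.le_div_iff_mul_le hj]
    constructor
    · rintro ⟨hi, k, rfl⟩
      exact ⟨k, by rwa [mul_comm], rfl⟩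
    · rintro ⟨k, hk, rfl⟩
      exact ⟨by rwa [mul_comm], dvd_mul_right j k⟩
  rw [← sum_filter, hfilter, sum_image fun a _ b _ h => Nat.eq_of_mul_eq_mul_left hj h]

theorem coeff_expTail_mul {j : ℕ} (hj : 0 < j) (y : ℝ) (f : PowerSeries ℝ) (n : ℕ) :
    coeff n (expTail j y * f) =
      ∑ l ∈ range (n / j + 1), y ^ l / l.factorial * coeff (n - j * l) f := by
  rw [coeff_mul, Nat.sum_antidiagonal_eq_sum_range_succ_mk]
  simp only [expTail, coeff_mk, ite_mul, zero_mul]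
  rw [sum_range_ite_dvd hj]
  simp only [Nat.mul_div_cancel_left _ hj]

theorem coshS_ne_zero : coshS ≠ 0 := by
  intro h
  simpa [coshS] using congrArg (coeff 0) h

theorem hermite_genocchi_explicit (SG : ℕ → ℝ → ℝ) (HG : ℕ → ℝ → ℝ → ℝ)
    (hSG : ∀ x : ℝ, coshS * PowerSeries.mk (fun n => SG n x / n.factorial) =
        2 * PowerSeries.X * expS x)
    (hHG : ∀ x y : ℝ,
      coshS * PowerSeries.mk (fun n => HG n x y / n.factorial) =
        2 * PowerSeries.X * (expS x * expTail 2 y)) :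
    ∀ (n : ℕ) (x y : ℝ),
      HG n x y = n.factorial * ∑ l ∈ Finset.range (n / 2 + 1),
        y ^ l * SG (n - 2 * l) x / (l.factorial * (n - 2 * l).factorial) := by
  intro n x y
  have hseries : PowerSeries.mk (fun n => HG n x y / n.factorial)
      = expTail 2 y * PowerSeries.mk (fun n => SG n x / n.factorial) := by
    apply mul_left_cancel₀ coshS_ne_zero
    rw [hHG, mul_left_comm coshS, hSG]
    ring
  have hcoeff := congrArg (coeff n) hseries
  rw [coeff_mk, coeff_expTail_mul two_pos, div_eq_iff (by positivity)] at hcoeff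
  rw [hcoeff, sum_mul, mul_sum]
  refine sum_congr rfl fun l _ => ?_
  rw [coeff_mk]
  ring
end

section
/- The second kind Genocchi polynomials can be expressed through the classical Genocchi numbers as 𝒢_n(x) = Σ_{k=0}^n Σ_{j=0}^{n-k} (n! / (k! j! (n-k-j)!)) 2^{k-1} x^{n-k-j} G_k, where G_k are the classical Genocchi numbers. -/
/-! Multiplying `(e^t + e^{-t}) 𝒢(t) = 2t e^{xt}` by `e^t` gives
`(e^{2t} + 1) 𝒢(t) = 2t e^{(x+1)t}`, while substituting `2t` into `(e^t + 1) G(t) = 2t` gives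
`(e^{2t} + 1) G(2t) = 4t`. Hence `2 𝒢(t) = G(2t) e^{(x+1)t}`; comparing coefficients of `t^n`
and expanding `(x+1)^{n-k}` binomially gives the double sum. -/

open PowerSeries

theorem expS_eq_rescale_exp (x : ℝ) : expS x = rescale x (exp ℝ) := by
  ext n
  simp [expS, coeff_rescale, coeff_exp, div_eq_mul_inv]

theorem rescale_one_exp_mul_coshS : rescale 1 (exp ℝ) * coshS = rescale 2 (exp ℝ) + 1 := by
  have hcosh : coshS = rescale 1 (exp ℝ) + rescale (-1) (exp ℝ) := by
    ext n
    simp [coshS, coeff_rescale, coeff_exp]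
    ring
  rw [hcosh, mul_add, exp_mul_exp_eq_exp_add, exp_mul_exp_eq_exp_add]
  norm_num

theorem rescale_two_exp_add_one_ne_zero : rescale (2 : ℝ) (exp ℝ) + 1 ≠ 0 := by
  intro h
  have h0 := congrArg (coeff 0) h
  rw [map_add, coeff_rescale, coeff_exp, coeff_one, map_zero] at h0
  norm_num at h0

theorem two_mul_eq_rescale_two_mul_expS {F S : PowerSeries ℝ} {x : ℝ}
    (hF : (exp ℝ + 1) * F = 2 * X) (hS : coshS * S = 2 * X * expS x) :
    2 * S = rescale 2 F * expS (x + 1) := by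
  have hF₂ : (rescale 2 (exp ℝ) + 1) * rescale 2 F = 4 * X := by
    have h := congrArg (rescale (2 : ℝ)) hF
    simp only [map_mul, map_add, map_one, map_ofNat, rescale_X] at h
    rw [h]
    ring
  have hS₂ : (rescale 2 (exp ℝ) + 1) * S = 2 * X * expS (x + 1) := by
    rw [← rescale_one_exp_mul_coshS, mul_assoc, hS, expS_eq_rescale_exp, expS_eq_rescale_exp,
      ← exp_mul_exp_eq_exp_add x 1]
    ring
  refine mul_left_cancel₀ rescale_two_exp_add_one_ne_zero ?_
  linear_combination 2 * hS₂ - expS (x + 1) * hF₂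

theorem factorial_mul_coeff_mul_mk_div_factorial {K : Type*} [Field K] [CharZero K]
    (a b : ℕ → K) (n : ℕ) :
    n.factorial * coeff n (mk (fun k => a k / k.factorial) * mk (fun k => b k / k.factorial)) =
      ∑ k ∈ Finset.range (n + 1), (n.choose k : K) * a k * b (n - k) := by
  rw [coeff_mul, Finset.Nat.sum_antidiagonal_eq_sum_range_succ_mk, Finset.mul_sum]
  refine Finset.sum_congr rfl fun k hk => ?_
  have hkn : k ≤ n := Nat.lt_succ_iff.mp (Finset.mem_range.mp hk)
  simp only [coeff_mk]
  rw [Nat.cast_choose K hkn]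
  field_simp

theorem sum_choose_mul_add_one_pow {R : Type*} [Field R] [CharZero R] (c : ℕ → R) (x : R)
    (n : ℕ) :
    ∑ k ∈ Finset.range (n + 1), (n.choose k : R) * c k * (x + 1) ^ (n - k) =
      ∑ k ∈ Finset.range (n + 1), ∑ j ∈ Finset.range (n - k + 1),
        (n.factorial : R) / (k.factorial * j.factorial * (n - k - j).factorial) *
          c k * x ^ (n - k - j) := by
  refine Finset.sum_congr rfl fun k hk => ?_
  have hkn : k ≤ n := Nat.lt_succ_iff.mp (Finset.mem_range.mp hk)
  rw [add_pow, ← Finset.sum_range_reflect, Finset.mul_sum]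
  refine Finset.sum_congr rfl fun j hj => ?_
  have hj : j ≤ n - k := Nat.lt_succ_iff.mp (Finset.mem_range.mp hj)
  rw [Nat.add_sub_cancel, Nat.sub_sub_self hj, Nat.choose_symm hj, Nat.cast_choose R hj,
    Nat.cast_choose R hkn, one_pow, mul_one]
  have : ((n - k).factorial : R) ≠ 0 := Nat.cast_ne_zero.mpr (n - k).factorial_ne_zero
  field_simp

theorem second_kind_genocchi_double_sum (G : ℕ → ℝ) (SG : ℕ → ℝ → ℝ)
    (hG : ((PowerSeries.mk fun n => (1 : ℝ) / n.factorial) + 1) *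
        PowerSeries.mk (fun n => G n / n.factorial) = 2 * PowerSeries.X)
    (hSG : ∀ x : ℝ, coshS * PowerSeries.mk (fun n => SG n x / n.factorial) =
        2 * PowerSeries.X * expS x) :
    ∀ (n : ℕ) (x : ℝ),
      SG n x = ∑ k ∈ Finset.range (n + 1), ∑ j ∈ Finset.range (n - k + 1),
        (n.factorial : ℝ) / (k.factorial * j.factorial * (n - k - j).factorial) *
          (2 : ℝ) ^ ((k : ℤ) - 1) * x ^ (n - k - j) * G k := by
  intro n x
  have hexp : (mk fun n => (1 : ℝ) / n.factorial) = exp ℝ := by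
    ext n
    simp [coeff_exp]
  rw [hexp] at hG
  have hcoeff := congrArg (coeff n) (two_mul_eq_rescale_two_mul_expS hG (hSG x))
  rw [show (2 : ℝ⟦X⟧) = C 2 from (map_ofNat C 2).symm] at hcoeff
  simp only [coeff_C_mul, coeff_mk, rescale_mk, expS, mul_div_assoc'] at hcoeff
  calc SG n x = 2⁻¹ * (n.factorial * (2 * SG n x / n.factorial)) := by field_simp
    _ = 2⁻¹ * ∑ k ∈ Finset.range (n + 1),
          (n.choose k : ℝ) * (2 ^ k * G k) * (x + 1) ^ (n - k) := by
      rw [hcoeff, factorial_mul_coeff_mul_mk_div_factorial]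
    _ = ∑ k ∈ Finset.range (n + 1),
          (n.choose k : ℝ) * (2 ^ ((k : ℤ) - 1) * G k) * (x + 1) ^ (n - k) := by
      rw [Finset.mul_sum]
      refine Finset.sum_congr rfl fun k _ => ?_
      rw [zpow_sub₀ two_ne_zero, zpow_natCast, zpow_one]
      ring
    _ = _ := by
      rw [sum_choose_mul_add_one_pow]
      exact Finset.sum_congr rfl fun k _ => Finset.sum_congr rfl fun j _ => by ring
end
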